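/- Suppose (ρ*, h*, f*) solves the stochastic average-reward optimality equations: ρ* + h*(s) = sup_{u ∈ U(s)} { r(s,u) + ∫ h*(s') Q(ds'|s,u) } = r(s, f*(s)) + ∫ h*(s') Q(ds'|s, f*(s)) for all s ∈ S, with h* integrable. Define h̄*(ν) = ∫ h* dν and let φ_{f*}(·|s) = δ_{f*(s)}. Then (ρ*, h̄*, φ_{f*}) solves the measurized average-reward optimality equations: ρ* + h̄*(ν) = sup_{φ ∈ Φ} { r̄(ν,φ) + h̄*(F(ν,φ)) } = r̄(ν, φ_{f*}) + h̄*(F(ν, φ_{f*})) for every probability measure ν on S. -/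

import Mathlib

/-!
Writing `ν ⊗ₘ φ` for the state-action distribution of `ν` and `φ`, the next-state distribution
`F(ν, φ)` is `Q ∘ₘ (ν ⊗ₘ φ)`. Hence `r̄(ν, φ) + h̄*(F(ν, φ))` is the integral against `ν ⊗ₘ φ`
of the one-step value `r(s, u) + ∫ h* dQ(·|s, u)`. Integrating the stochastic optimality
inequality first in `u` (over `φ(·|s)`, which lives on `U(s)`) and then in `s` gives the
measurized inequality; for `φ = δ_{f*}` the state-action distribution is the image of `ν` under
`s ↦ (s, f*(s))`, and the stochastic optimality equation integrates to the measurized one.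
-/

open MeasureTheory ProbabilityTheory

/-- The measurized (deterministic) transition. -/
noncomputable def measurizedF {S U : Type*} [MeasurableSpace S] [MeasurableSpace U]
    (Q : Kernel (S × U) S) (φ : Kernel S U) (ν : Measure S) : Measure S :=
  ν.bind (fun s => (φ s).bind (fun u => Q (s, u)))

/-- The measurized reward `r̄(ν, φ)`. -/
noncomputable def measurizedReward {S U : Type*} [MeasurableSpace S] [MeasurableSpace U]
    (r : S × U → ℝ) (φ : Kernel S U) (ν : Measure S) : ℝ :=
  ∫ s, ∫ u, r (s, u) ∂(φ s) ∂ν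

namespace MeasureTheory.Measure

variable {α β E : Type*} [MeasurableSpace α] [MeasurableSpace β]
  [NormedAddCommGroup E] [NormedSpace ℝ E] {μ : Measure α} {κ : Kernel α β}

lemma integral_comp {f : β → E} (hf : Integrable f (κ ∘ₘ μ)) :
    ∫ y, f y ∂(κ ∘ₘ μ) = ∫ x, ∫ y, f y ∂(κ x) ∂μ := by
  rw [comp_eq_comp_const_apply] at hf ⊢
  exact Kernel.integral_comp hf

lemma integrable_integral_of_integrable_comp {f : β → E} (hf : Integrable f (κ ∘ₘ μ)) :
    Integrable (fun x => ∫ y, f y ∂(κ x)) μ := by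
  rw [comp_eq_comp_const_apply] at hf
  simpa using hf.integral_comp

lemma integral_compProd_le_of_ae_le [SFinite μ] [IsMarkovKernel κ] {F : α × β → ℝ} {g : α → ℝ}
    (hF : Integrable F (μ ⊗ₘ κ)) (hg : Integrable g μ)
    (hle : ∀ᵐ a ∂μ, ∀ᵐ b ∂(κ a), F (a, b) ≤ g a) :
    ∫ p, F p ∂(μ ⊗ₘ κ) ≤ ∫ a, g a ∂μ := by
  rw [integral_compProd hF]
  refine integral_mono_ae hF.integral_compProd hg ?_
  filter_upwards [hle, ((integrable_compProd_iff hF.1).1 hF).1] with a hFg hFa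
  simpa using integral_mono_ae hFa (integrable_const (g a)) hFg

end MeasureTheory.Measure

section Measurized

variable {S U : Type*} [MeasurableSpace S] [MeasurableSpace U]

noncomputable def actionValue (r : S × U → ℝ) (Q : Kernel (S × U) S) (h : S → ℝ) (p : S × U) :
    ℝ :=
  r p + ∫ s', h s' ∂(Q p)

variable {Q : Kernel (S × U) S} {φ : Kernel S U} {ν : Measure S}

lemma measurizedF_eq_comp_compProd [IsSFiniteKernel φ] [SFinite ν] :
    measurizedF Q φ ν = Q ∘ₘ (ν ⊗ₘ φ) := by
  have bind_apply_eq : ∀ s {B : Set S}, MeasurableSet B →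
      ((fun u => Q (s, u)) ∘ₘ φ s) B = ∫⁻ u, Q (s, u) B ∂(φ s) := fun s _ hB =>
    Measure.bind_apply hB (Q.comap (Prod.mk s) measurable_prodMk_left).aemeasurable
  have hmeas : Measurable fun s => (fun u => Q (s, u)) ∘ₘ φ s :=
    Measure.measurable_of_measurable_coe _ fun B hB => by
      simp only [bind_apply_eq _ hB]
      exact (Q.measurable_coe hB).lintegral_kernel_prod_right' (κ := φ)
  ext B hB
  rw [measurizedF, Measure.bind_apply hB hmeas.aemeasurable, Measure.bind_apply hB Q.aemeasurable,
    Measure.lintegral_compProd (Q.measurable_coe hB)]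
  simp only [bind_apply_eq _ hB]

instance [IsMarkovKernel Q] [IsMarkovKernel φ] [IsProbabilityMeasure ν] :
    IsProbabilityMeasure (measurizedF Q φ ν) := by
  rw [measurizedF_eq_comp_compProd]
  infer_instance

variable [IsMarkovKernel φ] [SFinite ν] {r : S × U → ℝ} {h : S → ℝ}

lemma integrable_actionValue (hr : Integrable r (ν ⊗ₘ φ))
    (hh : Integrable h (measurizedF Q φ ν)) : Integrable (actionValue r Q h) (ν ⊗ₘ φ) := by
  rw [measurizedF_eq_comp_compProd] at hh
  exact hr.add (Measure.integrable_integral_of_integrable_comp hh)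

lemma measurizedReward_add_integral_measurizedF (hr : Integrable r (ν ⊗ₘ φ))
    (hh : Integrable h (measurizedF Q φ ν)) :
    measurizedReward r φ ν + ∫ s, h s ∂(measurizedF Q φ ν)
      = ∫ p, actionValue r Q h p ∂(ν ⊗ₘ φ) := by
  rw [measurizedF_eq_comp_compProd] at hh ⊢
  rw [measurizedReward, Measure.integral_comp hh, ← Measure.integral_compProd hr,
    ← integral_add hr (Measure.integrable_integral_of_integrable_comp hh)]
  rfl

end Measurized

theorem stmt13_general {S U : Type*} [MeasurableSpace S] [MeasurableSpace U]
    (Q : Kernel (S × U) S) [IsMarkovKernel Q]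
    (Uset : S → Set U) (hUm : ∀ s, MeasurableSet (Uset s))
    (r : S × U → ℝ) (hrm : Measurable r) (C : ℝ) (hrb : ∀ p, |r p| ≤ C)
    (ρ : ℝ) (h : S → ℝ)
    (hhint : ∀ ν : Measure S, IsProbabilityMeasure ν → Integrable h ν)
    (f : S → U) (hfm : Measurable f)
    (hsup : ∀ s, ∀ u ∈ Uset s, r (s, u) + ∫ s', h s' ∂(Q (s, u)) ≤ ρ + h s)
    (hsel : ∀ s, ρ + h s = r (s, f s) + ∫ s', h s' ∂(Q (s, f s))) :
    ∀ ν : Measure S, IsProbabilityMeasure ν →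
      (∀ φ : Kernel S U, IsMarkovKernel φ → (∀ s, φ s (Uset s) = 1) →
        measurizedReward r φ ν + ∫ s, h s ∂(measurizedF Q φ ν)
          ≤ ρ + ∫ s, h s ∂ν) ∧
      ρ + ∫ s, h s ∂ν
        = measurizedReward r (Kernel.deterministic f hfm) ν
          + ∫ s, h s ∂(measurizedF Q (Kernel.deterministic f hfm) ν) := by
  intro ν hν
  have hr (μ : Measure (S × U)) [IsFiniteMeasure μ] : Integrable r μ :=
    .of_bound hrm.aestronglyMeasurable C
      (ae_of_all _ fun p => (Real.norm_eq_abs _).trans_le (hrb p))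
  have hval : ∫ s, ρ + h s ∂ν = ρ + ∫ s, h s ∂ν := by
    rw [integral_add (integrable_const ρ) (hhint ν hν)]
    simp
  refine ⟨fun φ hφ hφU => ?_, ?_⟩
  · rw [measurizedReward_add_integral_measurizedF (hr _) (hhint _ inferInstance), ← hval]
    refine Measure.integral_compProd_le_of_ae_le
      (integrable_actionValue (hr _) (hhint _ inferInstance))
      ((integrable_const ρ).add (hhint ν hν)) (ae_of_all _ fun s => ?_)
    filter_upwards [(mem_ae_iff_prob_eq_one (hUm s)).2 (hφU s)] with u hu using hsup s u hu
  · have hint := integrable_actionValue (Q := Q) (hr (ν ⊗ₘ Kernel.deterministic f hfm))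
      (hhint _ inferInstance)
    rw [Measure.compProd_deterministic] at hint
    rw [measurizedReward_add_integral_measurizedF (hr _) (hhint _ inferInstance),
      Measure.compProd_deterministic, integral_map (by fun_prop) hint.1, ← hval]
    exact integral_congr_ae (ae_of_all _ hsel)

/-- If `(ρ*, h*, f*)` solves the stochastic average-reward
optimality equations, then `(ρ*, h̄*, φ_{f*})`, where `h̄*(ν) = ∫ h* dν` and
`φ_{f*}` is the kernel concentrated on `f*`, solves the measurized
average-reward optimality equations at every probability measure `ν`. -/
theorem stmt13 {S U : Type*} [MeasurableSpace S] [MeasurableSpace U]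
    (Q : Kernel (S × U) S) [IsMarkovKernel Q]
    (Uset : S → Set U) (hUm : ∀ s, MeasurableSet (Uset s))
    (r : S × U → ℝ) (hrm : Measurable r) (C : ℝ) (hrb : ∀ p, |r p| ≤ C)
    (ρ : ℝ) (h : S → ℝ) (hhm : Measurable h)
    (hhint : ∀ ν : Measure S, IsProbabilityMeasure ν → Integrable h ν)
    (hhQ : ∀ p : S × U, Integrable h (Q p))
    (f : S → U) (hfm : Measurable f) (hff : ∀ s, f s ∈ Uset s)
    (hsup : ∀ s, ∀ u ∈ Uset s, r (s, u) + ∫ s', h s' ∂(Q (s, u)) ≤ ρ + h s)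
    (hsel : ∀ s, ρ + h s = r (s, f s) + ∫ s', h s' ∂(Q (s, f s))) :
    ∀ ν : Measure S, IsProbabilityMeasure ν →
      (∀ φ : Kernel S U, IsMarkovKernel φ → (∀ s, φ s (Uset s) = 1) →
        measurizedReward r φ ν + ∫ s, h s ∂(measurizedF Q φ ν)
          ≤ ρ + ∫ s, h s ∂ν) ∧
      ρ + ∫ s, h s ∂ν
        = measurizedReward r (Kernel.deterministic f hfm) ν
          + ∫ s, h s ∂(measurizedF Q (Kernel.deterministic f hfm) ν) :=
  stmt13_general Q Uset hUm r hrm C hrb ρ h hhint f hfm hsup hsel
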